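/- arXiv:2003.01410 — 2 statements merged into one kernel-verified Lean document; each statement's English description precedes it below -/
import Mathlib

section
/- Under the hypotheses of the previous statement, by induction on t: if J_H(x₀) < ∞, then for every t ≥ 0 the expected MPC cost after t closed-loop steps satisfies E[J_H(x_t)] < ∞, where x_{t+1} = f(x_t, π*_t(x_t), w_t) is the closed-loop evolution under the MPC policy and the expectation is over w_0,…,w_{t−1}. -/
open MeasureTheory
open scoped ENNReal

/-- Expected `H`-step cost of the policy sequence `πs` from state `x`. -/
noncomputable def mpcCost {X U W : Type*} [MeasurableSpace W] (μ : Measure W)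
    (f : X → U → W → X) (C : X → U → ℝ≥0∞) (V : X → ℝ≥0∞) :
    ℕ → (ℕ → X → U) → X → ℝ≥0∞
  | 0, _, x => V x
  | (H + 1), πs, x =>
      C x (πs 0 x) + ∫⁻ w, mpcCost μ f C V H (fun i => πs (i + 1)) (f x (πs 0 x) w) ∂μ

/-- Robust admissibility of the policy sequence `πs` from `x`. -/
def mpcAdmissible {X U W : Type*} (f : X → U → W → X) (Wset : Set W)
    (𝒳 S : Set X) : ℕ → (ℕ → X → U) → X → Prop
  | 0, _, x => x ∈ S ∧ x ∈ 𝒳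
  | (H + 1), πs, x => x ∈ 𝒳 ∧
      ∀ w ∈ Wset, mpcAdmissible f Wset 𝒳 S H (fun i => πs (i + 1)) (f x (πs 0 x) w)

/-- The `H`-step MPC value: infimum of expected cost over admissible policy sequences. -/
noncomputable def mpcValue {X U W : Type*} [MeasurableSpace W] (μ : Measure W)
    (f : X → U → W → X) (C : X → U → ℝ≥0∞) (V : X → ℝ≥0∞) (Wset : Set W)
    (𝒳 S : Set X) (H : ℕ) (x : X) : ℝ≥0∞ :=
  ⨅ πs ∈ {πs : ℕ → X → U | mpcAdmissible f Wset 𝒳 S H πs x}, mpcCost μ f C V H πs x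

/-- Expectation of `g` at the state reached after `t` closed-loop steps under policy `π`
from `x`, the expectation being over the i.i.d. disturbances `w_0, …, w_{t-1} ∼ μ`. -/
noncomputable def closedLoopExp {X U W : Type*} [MeasurableSpace W] (μ : Measure W)
    (f : X → U → W → X) (π : X → U) (g : X → ℝ≥0∞) : ℕ → X → ℝ≥0∞
  | 0, x => g x
  | (t + 1), x => ∫⁻ w, closedLoopExp μ f π g t (f x (π x) w) ∂μ

/-- Lemma 1 (Recursive Feasibility): if the MPC policy `πmpc` satisfies the one-step
inequality `J_H(x) ≥ C(x, πmpc x) + E_w[J_H(f(x, πmpc x, w))]` whenever `J_H(x) < ∞`,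
and `J_H(x₀) < ∞`, then the expected MPC value after `t` closed-loop steps is finite
for every `t`. -/
theorem stmt_9 {X U W : Type*} [MeasurableSpace W] (μ : Measure W)
    [IsProbabilityMeasure μ] (f : X → U → W → X) (C : X → U → ℝ≥0∞)
    (V : X → ℝ≥0∞) (Wset : Set W) (𝒳 S : Set X) (H : ℕ)
    (πmpc : X → U)
    (honestep : ∀ x : X, mpcValue μ f C V Wset 𝒳 S H x < ⊤ →
      C x (πmpc x) +
          (∫⁻ w, mpcValue μ f C V Wset 𝒳 S H (f x (πmpc x) w) ∂μ) ≤
        mpcValue μ f C V Wset 𝒳 S H x)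
    (x₀ : X) (hfin : mpcValue μ f C V Wset 𝒳 S H x₀ < ⊤) :
    ∀ t : ℕ, closedLoopExp μ f πmpc (mpcValue μ f C V Wset 𝒳 S H) t x₀ < ⊤ := by
  set J := mpcValue μ f C V Wset 𝒳 S H with hJ
  have key : ∀ t x, closedLoopExp μ f πmpc J t x ≤ J x := by
    intro t
    induction t with
    | zero => intro x; simp [closedLoopExp]
    | succ t ih =>
      intro x
      show (∫⁻ w, closedLoopExp μ f πmpc J t (f x (πmpc x) w) ∂μ) ≤ J x
      by_cases hx : J x < ⊤
      · calc (∫⁻ w, closedLoopExp μ f πmpc J t (f x (πmpc x) w) ∂μ)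
            ≤ ∫⁻ w, J (f x (πmpc x) w) ∂μ := lintegral_mono fun w => ih _
          _ ≤ C x (πmpc x) + ∫⁻ w, J (f x (πmpc x) w) ∂μ := le_add_self
          _ ≤ J x := honestep x hx
      · simp [not_lt, top_le_iff] at hx; simp [hx]
  exact fun t => lt_of_le_of_lt (key t x₀) hfin
end

section
/- Combining the two inequalities J^{j+1}_{0→H}(x₀) ≤ J^{π^j}(x₀) ≤ J^{j}_{0→H}(x₀) and J^{π^{j+1}}(x₀) ≤ J^{j+1}_{0→H}(x₀): the expected infinite-horizon closed-loop costs satisfy J^{π^{j+1}}(x₀) ≤ J^{π^j}(x₀) for all j, i.e., the sequence of expected closed-loop costs from a fixed feasible start state is non-increasing across iterations, and hence convergent. -/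
open Filter

/-- Theorem 1 (Iterative Improvement), combination step: from
`J^{j+1}_{0→H}(x₀) ≤ J^{π^j}(x₀)` and `J^{π^j}(x₀) ≤ J^{j}_{0→H}(x₀)` for all `j`,
the nonnegative expected closed-loop costs `J^{π^j}(x₀)` are non-increasing in `j`
and hence convergent. -/
theorem stmt_12 (Jpi JH : ℕ → ℝ)
    (hnonneg : ∀ j, 0 ≤ Jpi j)
    (h1 : ∀ j, JH (j + 1) ≤ Jpi j)
    (h2 : ∀ j, Jpi j ≤ JH j) :
    (∀ j, Jpi (j + 1) ≤ Jpi j) ∧ ∃ l : ℝ, Tendsto Jpi atTop (nhds l) := by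
  have hmono : ∀ j, Jpi (j + 1) ≤ Jpi j := fun j => (h2 (j + 1)).trans (h1 j)
  refine ⟨hmono, ⟨⨅ j, Jpi j, ?_⟩⟩
  exact tendsto_atTop_ciInf (antitone_nat_of_succ_le hmono)
    ⟨0, fun x ⟨j, hj⟩ => hj ▸ hnonneg j⟩
end
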